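/- For any integer l ≥ 0 and any complex-valued harmonic homogeneous polynomial H of degree l on ℝ³, the function u(x) := ( J_{2l+1}(√(8|x|)) / (√(8|x|) |x|^l) ) H(x) satisfies Δu + (2/|x|) u = 0 on ℝ³ \ {0} and extends continuously to all of ℝ³. -/

import Mathlib

/-!
The Bessel factor is `g(‖x‖)` for the entire power series
`g(r) = ∑ⱼ (-1)ʲ 2^(j+l) rʲ / (2 j! (j+2l+1)!)`, and the coefficient recursion
`(j+1)(j+2l+2) aⱼ₊₁ = -2 aⱼ` says exactly that `r g'' + (2l+2) g' + 2 g = 0`.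
For `u = g(‖x‖) H`, the product rule for the Laplacian together with `ΔH = 0`,
`Δ g(‖x‖) = g'' + 2 g' / ‖x‖` and Euler's identity `x · ∇H = l H` gives
`Δu = (g'' + (2l+2) g' / ‖x‖) H`, hence `Δu + 2u / ‖x‖ = (‖x‖ g'' + (2l+2) g' + 2 g) H / ‖x‖ = 0`.
Since `g` is a power series, `g(‖x‖) H(x)` is also the continuous extension through the origin.
-/

open MeasureTheory Metric Set
open scoped ContDiff

noncomputable section

abbrev R3 := EuclideanSpace ℝ (Fin 3)

/-- The Laplacian on ℝ³, as the sum of the second partial derivatives. -/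
def lap {F : Type*} [NormedAddCommGroup F] [NormedSpace ℝ F] (f : R3 → F) (x : R3) : F :=
  ∑ i : Fin 3, fderiv ℝ (fun y => fderiv ℝ f y (EuclideanSpace.single i 1)) x
    (EuclideanSpace.single i 1)

/-- The Bessel function of the first kind of integer order `ν`. -/
def besselJ (ν : ℕ) (x : ℝ) : ℝ :=
  ∑' j : ℕ, (-1 : ℝ) ^ j / ((Nat.factorial j) * (Nat.factorial (j + ν))) * (x / 2) ^ (2 * j + ν)

open Filter Topology
open scoped Nat

def pseries (b : ℕ → ℝ) (r : ℝ) : ℝ := ∑' j, b j * r ^ j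

def derivCoeff (b : ℕ → ℝ) (j : ℕ) : ℝ := (j + 1) * b (j + 1)

def FactorialBounded (b : ℕ → ℝ) : Prop := ∃ C K : ℝ, ∀ j, |b j| ≤ C * K ^ j / j !

namespace FactorialBounded

variable {b : ℕ → ℝ}

lemma derivCoeff (hb : FactorialBounded b) : FactorialBounded (derivCoeff b) := by
  obtain ⟨C, K, hCK⟩ := hb
  refine ⟨C * K, K, fun j => ?_⟩
  rw [_root_.derivCoeff, abs_mul, abs_of_nonneg (by positivity)]
  calc ((j : ℝ) + 1) * |b (j + 1)| ≤ (j + 1) * (C * K ^ (j + 1) / (j + 1)!) := by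
        gcongr; exact hCK (j + 1)
    _ = C * K * K ^ j / j ! := by
        rw [Nat.factorial_succ]; push_cast; field_simp; ring

lemma summable_abs_mul_pow (hb : FactorialBounded b) {R : ℝ} (hR : 0 ≤ R) :
    Summable fun j => |b j| * R ^ j := by
  obtain ⟨C, K, hCK⟩ := hb
  refine .of_nonneg_of_le (fun j => by positivity) (fun j => ?_)
    ((Real.summable_pow_div_factorial (K * R)).mul_left C)
  calc |b j| * R ^ j ≤ C * K ^ j / j ! * R ^ j := by gcongr; exact hCK j
    _ = C * ((K * R) ^ j / j !) := by ring

lemma hasSum (hb : FactorialBounded b) (r : ℝ) :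
    HasSum (fun j => b j * r ^ j) (pseries b r) :=
  (Summable.of_norm_bounded (hb.summable_abs_mul_pow (abs_nonneg r))
    fun j => by rw [Real.norm_eq_abs, abs_mul, abs_pow]).hasSum

lemma hasDerivAt (hb : FactorialBounded b) (r : ℝ) :
    HasDerivAt (pseries b) (pseries (_root_.derivCoeff b) r) r := by
  set R := |r| + 1
  have hterm : ∀ (j : ℕ) {z : ℝ}, |z| ≤ R →
      ‖b j * (j * z ^ (j - 1))‖ ≤ |b j| * (j * R ^ (j - 1)) := fun j z hz => by
    rw [Real.norm_eq_abs, abs_mul, abs_mul, abs_pow, Nat.abs_cast]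
    gcongr
  -- after the index shift `j ↦ j + 1` the bounds are those of the derived series
  have hbound : Summable fun j : ℕ => |b j| * (j * R ^ (j - 1)) := by
    refine (summable_nat_add_iff 1).mp
      ((hb.derivCoeff.summable_abs_mul_pow (R := R) (by positivity)).congr fun j => ?_)
    rw [_root_.derivCoeff, abs_mul, abs_of_nonneg (by positivity)]
    push_cast
    ring
  have hderiv : HasDerivAt (pseries b) (∑' j, b j * (j * r ^ (j - 1))) r :=
    hasDerivAt_tsum_of_isPreconnected hbound isOpen_ball (convex_ball 0 R).isPreconnected
      (fun j z _ => (hasDerivAt_pow j z).const_mul (b j))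
      (fun j z hz => hterm j (by simpa using (mem_ball_zero_iff.1 hz).le))
      (mem_ball_self (by positivity)) (hb.hasSum 0).summable (by simp [R])
  have hshift : ∑' j, b j * (j * r ^ (j - 1)) = pseries (_root_.derivCoeff b) r := by
    rw [(Summable.of_norm_bounded hbound fun j => hterm j (by simp [R])).tsum_eq_zero_add]
    simp only [pseries, _root_.derivCoeff, CharP.cast_eq_zero, zero_mul, mul_zero, zero_add]
    exact tsum_congr fun j => by push_cast; ring
  exact hshift ▸ hderiv

lemma deriv_pseries (hb : FactorialBounded b) :
    deriv (pseries b) = pseries (_root_.derivCoeff b) :=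
  funext fun r => (hb.hasDerivAt r).deriv

lemma contDiff_pseries (hb : FactorialBounded b) (n : ℕ) : ContDiff ℝ n (pseries b) := by
  induction n generalizing b with
  | zero =>
    exact contDiff_zero.2 (continuous_iff_continuousAt.2 fun r => (hb.hasDerivAt r).continuousAt)
  | succ n ih =>
    rw [Nat.cast_succ, contDiff_succ_iff_deriv]
    exact ⟨fun r => (hb.hasDerivAt r).differentiableAt, by simp,
      hb.deriv_pseries ▸ ih hb.derivCoeff⟩

lemma hasSum_mul_pseries_derivCoeff (hb : FactorialBounded b) (r : ℝ) :
    HasSum (fun j => j * b j * r ^ j) (r * pseries (_root_.derivCoeff b) r) := by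
  rw [← hasSum_nat_add_iff' 1]
  simpa [_root_.derivCoeff, pow_succ, mul_assoc, mul_comm, mul_left_comm]
    using (hb.derivCoeff.hasSum r).mul_left r

end FactorialBounded

def besselCoeff (l j : ℕ) : ℝ := (-1) ^ j * 2 ^ (j + l) / (2 * j ! * (j + 2 * l + 1)!)

/-- `r ↦ J_{2l+1}(√(8r)) / (√(8r) r^l)`, written as a power series in `r`; this is what makes
it smooth through `r = 0`. -/
def besselRadial (l : ℕ) : ℝ → ℝ := pseries (besselCoeff l)

lemma factorialBounded_besselCoeff (l : ℕ) : FactorialBounded (besselCoeff l) := by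
  refine ⟨2 ^ l, 2, fun j => ?_⟩
  have hden : (1 : ℝ) ≤ 2 * (j + 2 * l + 1)! := by
    have : (1 : ℝ) ≤ (j + 2 * l + 1)! := Nat.one_le_cast.2 (Nat.factorial_pos _)
    linarith
  calc |besselCoeff l j| = 2 ^ (j + l) / (j ! * (2 * (j + 2 * l + 1)!)) := by
        rw [besselCoeff, abs_div, abs_mul, abs_pow, abs_neg, abs_one, one_pow, one_mul,
          abs_of_pos (by positivity), abs_of_pos (by positivity)]
        ring
    _ ≤ 2 ^ (j + l) / (j ! * 1) := by gcongr
    _ = 2 ^ l * 2 ^ j / j ! := by ring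

lemma besselCoeff_succ (l j : ℕ) :
    (j + 1) * (j + 2 * l + 2) * besselCoeff l (j + 1) = -2 * besselCoeff l j := by
  rw [besselCoeff, besselCoeff, show j + 1 + 2 * l + 1 = j + 2 * l + 1 + 1 by omega,
    Nat.factorial_succ, Nat.factorial_succ, show j + 1 + l = j + l + 1 by omega, pow_succ]
  push_cast
  field_simp
  ring

lemma besselRadial_ode (l : ℕ) (r : ℝ) :
    r * deriv (deriv (besselRadial l)) r + (2 * l + 2) * deriv (besselRadial l) r
      + 2 * besselRadial l r = 0 := by
  have ha := factorialBounded_besselCoeff l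
  rw [besselRadial, ha.deriv_pseries, ha.derivCoeff.deriv_pseries]
  have hsum := ((ha.derivCoeff.hasSum_mul_pseries_derivCoeff r).add
    ((ha.derivCoeff.hasSum r).mul_left (2 * (l : ℝ) + 2))).add ((ha.hasSum r).mul_left 2)
  refine hsum.unique (hasSum_zero.congr_fun fun j => ?_)
  simp only [derivCoeff]
  linear_combination r ^ j * besselCoeff_succ l j

lemma besselJ_div_eq_besselRadial (l : ℕ) {r : ℝ} (hr : 0 < r) :
    besselJ (2 * l + 1) (√(8 * r)) / (√(8 * r) * r ^ l) = besselRadial l r := by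
  have hsq : √(8 * r) ^ 2 = 8 * r := Real.sq_sqrt (by positivity)
  have hpos : 0 < √(8 * r) := Real.sqrt_pos.2 (by positivity)
  rw [besselJ, besselRadial, pseries, ← tsum_div_const]
  refine tsum_congr fun j => ?_
  rw [show 2 * j + (2 * l + 1) = 2 * (j + l) + 1 by ring, pow_succ, pow_mul, div_pow, hsq,
    besselCoeff, show j + (2 * l + 1) = j + 2 * l + 1 by ring]
  field_simp
  ring

section NormCalculus

variable {E : Type*} [NormedAddCommGroup E] [InnerProductSpace ℝ E]

lemma hasFDerivAt_norm {y : E} (hy : y ≠ 0) :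
    HasFDerivAt (fun z : E => ‖z‖) (‖y‖⁻¹ • innerSL ℝ y) y := by
  have hsqrt := (Real.hasDerivAt_sqrt (by positivity : ‖y‖ ^ 2 ≠ 0)).comp_hasFDerivAt y
    (hasStrictFDerivAt_norm_sq y).hasFDerivAt
  simp only [Function.comp_def, Real.sqrt_sq (norm_nonneg _)] at hsqrt
  refine hsqrt.congr_fderiv ?_
  ext v
  simp only [one_div, mul_inv_rev, smul_apply, coe_innerSL_apply, nsmul_eq_mul, Nat.cast_ofNat,
    smul_eq_mul]
  field_simp

lemma HasDerivAt.hasFDerivAt_comp_norm {g : ℝ → ℝ} {g' : ℝ} {y : E} (hg : HasDerivAt g g' ‖y‖)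
    (hy : y ≠ 0) : HasFDerivAt (fun z : E => g ‖z‖) ((g' / ‖y‖) • innerSL ℝ y) y := by
  simpa [Function.comp_def, smul_smul, div_eq_mul_inv] using
    hg.comp_hasFDerivAt y (hasFDerivAt_norm hy)

end NormCalculus

lemma fderiv_apply_self_of_homogeneous {E F : Type*} [NormedAddCommGroup E] [NormedSpace ℝ E]
    [NormedAddCommGroup F] [NormedSpace ℝ F] {H : E → F} {x : E} {l : ℕ}
    (hH : DifferentiableAt ℝ H x) (hhom : ∀ t : ℝ, H (t • x) = t ^ l • H x) :
    fderiv ℝ H x x = (l : ℝ) • H x := by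
  have hray : HasDerivAt (fun t : ℝ => H (t • x)) (fderiv ℝ H x x) 1 := by
    simpa [Function.comp_def] using
      hH.hasFDerivAt.comp_hasDerivAt_of_eq 1 ((hasDerivAt_id 1).smul_const x) (one_smul ℝ x).symm
  simp only [hhom] at hray
  simpa using hray.unique ((hasDerivAt_pow l 1).smul_const (H x))

section PartialDeriv

variable {F : Type*} [NormedAddCommGroup F] [NormedSpace ℝ F]

def partialDeriv (i : Fin 3) (f : R3 → F) (x : R3) : F :=
  fderiv ℝ f x (EuclideanSpace.single i 1)

lemma lap_eq_sum_partialDeriv (f : R3 → F) (x : R3) :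
    lap f x = ∑ i, partialDeriv i (partialDeriv i f) x := rfl

lemma partialDeriv_congr {f g : R3 → F} {x : R3} (h : f =ᶠ[𝓝 x] g) (i : Fin 3) :
    partialDeriv i f x = partialDeriv i g x := by
  rw [partialDeriv, h.fderiv_eq, partialDeriv]

lemma HasFDerivAt.partialDeriv_eq {f : R3 → F} {f' : R3 →L[ℝ] F} {x : R3}
    (h : HasFDerivAt f f' x) (i : Fin 3) : partialDeriv i f x = f' (EuclideanSpace.single i 1) := by
  rw [partialDeriv, h.fderiv]

lemma ContDiffAt.differentiableAt_partialDeriv {f : R3 → F} {x : R3} (h : ContDiffAt ℝ 2 f x)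
    (i : Fin 3) : DifferentiableAt ℝ (partialDeriv i f) x :=
  ((h.fderiv_right (m := 1) le_rfl).differentiableAt one_ne_zero).clm_apply
    (differentiableAt_const _)

lemma partialDeriv_add {f g : R3 → F} {x : R3} (hf : DifferentiableAt ℝ f x)
    (hg : DifferentiableAt ℝ g x) (i : Fin 3) :
    partialDeriv i (fun y => f y + g y) x = partialDeriv i f x + partialDeriv i g x := by
  simp [partialDeriv, fderiv_fun_add hf hg]

lemma partialDeriv_smul {c : R3 → ℝ} {f : R3 → F} {x : R3} (hc : DifferentiableAt ℝ c x)
    (hf : DifferentiableAt ℝ f x) (i : Fin 3) :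
    partialDeriv i (fun y => c y • f y) x =
      c x • partialDeriv i f x + partialDeriv i c x • f x := by
  simp [partialDeriv, fderiv_fun_smul hc hf]

lemma sum_smul_partialDeriv (f : R3 → F) (x v : R3) :
    ∑ i, v i • partialDeriv i f x = fderiv ℝ f x v := by
  conv_rhs => rw [← (EuclideanSpace.basisFun (Fin 3) ℝ).sum_repr v]
  simp [partialDeriv, map_sum, map_smul]

lemma lap_congr {f g : R3 → F} {x : R3} (h : f =ᶠ[𝓝 x] g) : lap f x = lap g x := by
  simp only [lap_eq_sum_partialDeriv]
  refine Finset.sum_congr rfl fun i _ => partialDeriv_congr ?_ i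
  exact h.eventually_nhds.mono fun y hy => partialDeriv_congr hy i

lemma lap_smul {c : R3 → ℝ} {f : R3 → F} {x : R3} (hc : ContDiffAt ℝ 2 c x)
    (hf : ContDiffAt ℝ 2 f x) :
    lap (fun y => c y • f y) x =
      c x • lap f x + (2 : ℝ) • ∑ i, partialDeriv i c x • partialDeriv i f x + lap c x • f x := by
  have hnear : ∀ᶠ y in 𝓝 x, ContDiffAt ℝ 2 c y ∧ ContDiffAt ℝ 2 f y :=
    (hc.eventually (by simp)).and (hf.eventually (by simp))
  have hfirst (i : Fin 3) : partialDeriv i (fun y => c y • f y) =ᶠ[𝓝 x]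
      fun y => c y • partialDeriv i f y + partialDeriv i c y • f y :=
    hnear.mono fun y hy =>
      partialDeriv_smul (hy.1.differentiableAt two_ne_zero) (hy.2.differentiableAt two_ne_zero) i
  have hcd := hc.differentiableAt two_ne_zero
  have hfd := hf.differentiableAt two_ne_zero
  have hsecond (i : Fin 3) : partialDeriv i (partialDeriv i (fun y => c y • f y)) x =
      c x • partialDeriv i (partialDeriv i f) x + partialDeriv i c x • partialDeriv i f x +
        (partialDeriv i c x • partialDeriv i f x + partialDeriv i (partialDeriv i c) x • f x) := by
    have hcd' := hc.differentiableAt_partialDeriv i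
    have hfd' := hf.differentiableAt_partialDeriv i
    rw [partialDeriv_congr (hfirst i), partialDeriv_add (hcd.fun_smul hfd') (hcd'.fun_smul hfd),
      partialDeriv_smul hcd hfd', partialDeriv_smul hcd' hfd]
  simp only [lap_eq_sum_partialDeriv, hsecond, Finset.sum_add_distrib, Finset.smul_sum,
    Finset.sum_smul, two_smul]
  abel

end PartialDeriv

section Radial

variable {F : Type*} [NormedAddCommGroup F] [NormedSpace ℝ F]

lemma partialDeriv_comp_norm {g : ℝ → ℝ} {g' : ℝ} {y : R3} (hg : HasDerivAt g g' ‖y‖)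
    (hy : y ≠ 0) (i : Fin 3) : partialDeriv i (fun z => g ‖z‖) y = g' / ‖y‖ * y i := by
  simp [(hg.hasFDerivAt_comp_norm hy).partialDeriv_eq, EuclideanSpace.inner_single_right]

lemma lap_comp_norm {g : ℝ → ℝ} {x : R3} (hg : ContDiffAt ℝ 2 g ‖x‖) (hx : x ≠ 0) :
    lap (fun y => g ‖y‖) x = deriv (deriv g) ‖x‖ + 2 / ‖x‖ * deriv g ‖x‖ := by
  have hr : 0 < ‖x‖ := norm_pos_iff.2 hx
  have hnear : ∀ᶠ y in 𝓝 x, y ≠ 0 ∧ ContDiffAt ℝ 2 g ‖y‖ :=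
    (eventually_ne_nhds hx).and ((continuous_norm.tendsto x).eventually (hg.eventually (by simp)))
  have hgrad (i : Fin 3) : partialDeriv i (fun y => g ‖y‖) =ᶠ[𝓝 x]
      fun y => deriv g ‖y‖ / ‖y‖ * y i :=
    hnear.mono fun y hy =>
      partialDeriv_comp_norm (hy.2.differentiableAt two_ne_zero).hasDerivAt hy.1 i
  have hquot : HasDerivAt (fun t => deriv g t / t)
      ((deriv (deriv g) ‖x‖ * ‖x‖ - deriv g ‖x‖) / ‖x‖ ^ 2) ‖x‖ := by
    refine (((hg.derivWithin (m := 1) (by norm_num)).differentiableAt one_ne_zero).hasDerivAt.div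
      (hasDerivAt_id' ‖x‖) hr.ne').congr_deriv ?_
    ring
  have hsecond (i : Fin 3) : partialDeriv i (partialDeriv i (fun y => g ‖y‖)) x =
      (deriv (deriv g) ‖x‖ * ‖x‖ - deriv g ‖x‖) / ‖x‖ ^ 3 * x i ^ 2 + deriv g ‖x‖ / ‖x‖ := by
    have hproj : HasFDerivAt (fun y : R3 => y i) (EuclideanSpace.proj i : R3 →L[ℝ] ℝ) x :=
      (EuclideanSpace.proj (𝕜 := ℝ) i).hasFDerivAt
    rw [partialDeriv_congr (hgrad i),
      ((hquot.hasFDerivAt_comp_norm hx).fun_mul hproj).partialDeriv_eq]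
    simp only [add_apply, smul_apply, PiLp.proj_apply, PiLp.single_eq_same, smul_eq_mul, mul_one,
      coe_innerSL_apply, EuclideanSpace.inner_single_right, Real.ringHom_apply, one_mul]
    field_simp
    ring
  rw [lap_eq_sum_partialDeriv, Fintype.sum_congr _ _ hsecond, Finset.sum_add_distrib,
    ← Finset.mul_sum, ← EuclideanSpace.real_norm_sq_eq, Finset.sum_const, Finset.card_univ,
    Fintype.card_fin, nsmul_eq_mul]
  field_simp
  ring

theorem lap_radial_smul_of_harmonic_homogeneous {g : ℝ → ℝ} {H : R3 → F} {x : R3} {l : ℕ}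
    (hx : x ≠ 0) (hg : ContDiffAt ℝ 2 g ‖x‖) (hH : ContDiffAt ℝ 2 H x) (hharm : lap H x = 0)
    (hhom : ∀ t : ℝ, H (t • x) = t ^ l • H x) :
    lap (fun y => g ‖y‖ • H y) x =
      (deriv (deriv g) ‖x‖ + (2 * l + 2) / ‖x‖ * deriv g ‖x‖) • H x := by
  have hgrad (i : Fin 3) : partialDeriv i (fun y => g ‖y‖) x = deriv g ‖x‖ / ‖x‖ * x i :=
    partialDeriv_comp_norm (hg.differentiableAt two_ne_zero).hasDerivAt hx i
  have heuler : ∑ i, partialDeriv i (fun y => g ‖y‖) x • partialDeriv i H x =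
      (deriv g ‖x‖ / ‖x‖ * l) • H x := by
    simp only [hgrad, mul_smul, ← Finset.smul_sum, sum_smul_partialDeriv,
      fderiv_apply_self_of_homogeneous (hH.differentiableAt two_ne_zero) hhom]
  have hc : ContDiffAt ℝ 2 (fun y => g ‖y‖) x := hg.comp x (contDiffAt_norm ℝ hx)
  rw [lap_smul hc hH, hharm, heuler, lap_comp_norm hg hx,
    smul_zero, zero_add, smul_smul, ← add_smul]
  congr 1
  ring

end Radial

/-- For any `l ≥ 0` and any complex-valued harmonic homogeneous polynomial `H` of degree `l`
on ℝ³ (characterized as a smooth, harmonic function homogeneous of degree `l`), the function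
`u(x) = (J_{2l+1}(√(8|x|)) / (√(8|x|) |x|^l)) H(x)` satisfies `Δu + (2/|x|)u = 0` on
`ℝ³ \ {0}` and extends continuously to all of ℝ³. -/
theorem bessel_harmonic_solves_zero_energy_coulomb
    (l : ℕ) (H : R3 → ℂ) (hsmooth : ContDiff ℝ ∞ H)
    (hharm : ∀ x : R3, lap H x = 0)
    (hhom : ∀ (t : ℝ) (x : R3), H (t • x) = (t : ℂ) ^ l * H x) :
    (∀ x : R3, x ≠ 0 →
      lap (fun y => ((besselJ (2 * l + 1) (Real.sqrt (8 * ‖y‖)) /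
            (Real.sqrt (8 * ‖y‖) * ‖y‖ ^ l) : ℝ) : ℂ) * H y) x
        + ((2 / ‖x‖ : ℝ) : ℂ) *
          (((besselJ (2 * l + 1) (Real.sqrt (8 * ‖x‖)) /
            (Real.sqrt (8 * ‖x‖) * ‖x‖ ^ l) : ℝ) : ℂ) * H x) = 0) ∧
    ∃ v : R3 → ℂ, Continuous v ∧ ∀ x : R3, x ≠ 0 →
      v x = ((besselJ (2 * l + 1) (Real.sqrt (8 * ‖x‖)) /
        (Real.sqrt (8 * ‖x‖) * ‖x‖ ^ l) : ℝ) : ℂ) * H x := by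
  have hbessel (y : R3) (hy : y ≠ 0) :
      besselJ (2 * l + 1) (√(8 * ‖y‖)) / (√(8 * ‖y‖) * ‖y‖ ^ l) = besselRadial l ‖y‖ :=
    besselJ_div_eq_besselRadial l (norm_pos_iff.2 hy)
  have hradial (n : ℕ) : ContDiff ℝ n (besselRadial l) :=
    (factorialBounded_besselCoeff l).contDiff_pseries n
  refine ⟨fun x hx => ?_, fun y => besselRadial l ‖y‖ • H y,
    ((hradial 0).continuous.comp continuous_norm).smul hsmooth.continuous,
    fun x hx => by simp only [hbessel x hx, Complex.real_smul]⟩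
  have hnear : (fun y => ((besselJ (2 * l + 1) (√(8 * ‖y‖)) / (√(8 * ‖y‖) * ‖y‖ ^ l) : ℝ) : ℂ)
      * H y) =ᶠ[𝓝 x] fun y => besselRadial l ‖y‖ • H y :=
    (eventually_ne_nhds hx).mono fun y hy => by simp only [hbessel y hy, Complex.real_smul]
  have hhom' (t : ℝ) : H (t • x) = t ^ l • H x := by
    rw [hhom, Complex.real_smul, Complex.ofReal_pow]
  rw [lap_congr hnear, lap_radial_smul_of_harmonic_homogeneous hx (hradial 2).contDiffAt
    (hsmooth.contDiffAt.of_le (WithTop.coe_le_coe.2 le_top)) (hharm x) hhom', hbessel x hx,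
    ← mul_assoc, ← Complex.ofReal_mul, ← Complex.real_smul, ← add_smul]
  have hr : ‖x‖ ≠ 0 := norm_ne_zero_iff.2 hx
  -- the coefficient is the radial ODE divided by `‖x‖`
  convert zero_smul ℝ (H x)
  field_simp
  linear_combination besselRadial_ode l ‖x‖
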